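/- arXiv:0710.1658 — 4 statements merged into one kernel-verified Lean document; each statement's English description precedes it below -/
import Mathlib

section
/- Let b0, b1, b2, b3, b4 be arbitrary real numbers and let A be the real 4×4 antisymmetric matrix A = [[0, b0, 2b1, b2], [−b0, 0, 3b2, 2b3], [−2b1, −3b2, 0, b4], [−b2, −2b3, −b4, 0]] (the antisymmetric part of the Ricci tensor of the gl(2,R) connection). Then det A = (3b2² − 4b1·b3 + b0·b4)². -/
theorem Matrix.det_fin_four_skew_eq_sq {R : Type*} [CommRing R] (a b c d e f : R) :
    (!![0, a, b, c;
        -a, 0, d, e;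
        -b, -d, 0, f;
        -c, -e, -f, 0] : Matrix (Fin 4) (Fin 4) R).det = (a * f - b * e + c * d) ^ 2 := by
  simp [Matrix.det_succ_row_zero, Fin.sum_univ_succ, Fin.succAbove]
  ring

/-- `I₃` is the Pfaffian of `A`. -/
theorem det_antisymmetric_ricci (b0 b1 b2 b3 b4 : ℝ) :
    (!![0, b0, 2*b1, b2;
        -b0, 0, 3*b2, 2*b3;
        -2*b1, -3*b2, 0, b4;
        -b2, -2*b3, -b4, 0] : Matrix (Fin 4) (Fin 4) ℝ).det
      = (3*b2^2 - 4*b1*b3 + b0*b4)^2 := by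
  simp only [neg_mul, Matrix.det_fin_four_skew_eq_sq]
  ring
end

section
/- The function F(x, y, y1, y2, y3) = y3^(4/3), defined on the region y3 > 0 of the 5-dimensional jet space, satisfies both of Bryant's conditions: (C1) 4D²F₃ − 8DF₂ + 8F₁ − 6(DF₃)F₃ + 4F₂F₃ + F₃³ = 0 and (C2) 160D²F₂ − 640DF₁ + 144(DF₃)² − 352(DF₃)F₂ + 144F₂² − 80(DF₂)F₃ + 160F₁F₃ − 72(DF₃)F₃² + 88F₂F₃² + 9F₃⁴ + 16000F_y = 0. Hence the ODE y'''' = (y''')^(4/3) satisfies Bryant's contact-invariant conditions. -/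
/-- Coordinates on the 5-dimensional jet space `J` are `p 0 = x`, `p 1 = y`,
`p 2 = y₁`, `p 3 = y₂`, `p 4 = y₃`.  `pder i G` is the partial derivative of a
function `G` on `J` with respect to the `i`-th coordinate. -/
noncomputable def pder (i : Fin 5) (G : (Fin 5 → ℝ) → ℝ) : (Fin 5 → ℝ) → ℝ :=
  fun p => deriv (fun t => G (Function.update p i t)) (p i)

/-- The total derivative `D = ∂ₓ + y₁∂_y + y₂∂_{y₁} + y₃∂_{y₂} + F ∂_{y₃}`
associated to the ODE `y'''' = F`, applied to a function `G` on the jet space. -/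
noncomputable def Dtot (F G : (Fin 5 → ℝ) → ℝ) : (Fin 5 → ℝ) → ℝ :=
  fun p => pder 0 G p + p 1 * pder 1 G p + p 2 * pder 2 G p
    + p 3 * pder 3 G p + F p * pder 4 G p

/-- Bryant's first contact-invariant condition
`4D²F₃ - 8DF₂ + 8F₁ - 6(DF₃)F₃ + 4F₂F₃ + F₃³ = 0` at the point `p`. -/
def BryantC1 (F : (Fin 5 → ℝ) → ℝ) (p : Fin 5 → ℝ) : Prop :=
  4 * Dtot F (Dtot F (pder 4 F)) p - 8 * Dtot F (pder 3 F) p + 8 * pder 2 F p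
    - 6 * Dtot F (pder 4 F) p * pder 4 F p + 4 * pder 3 F p * pder 4 F p
    + (pder 4 F p)^3 = 0

/-- Bryant's second contact-invariant condition at the point `p`. -/
def BryantC2 (F : (Fin 5 → ℝ) → ℝ) (p : Fin 5 → ℝ) : Prop :=
  160 * Dtot F (Dtot F (pder 3 F)) p - 640 * Dtot F (pder 2 F) p
    + 144 * (Dtot F (pder 4 F) p)^2 - 352 * Dtot F (pder 4 F) p * pder 3 F p
    + 144 * (pder 3 F p)^2 - 80 * Dtot F (pder 3 F) p * pder 4 F p
    + 160 * pder 2 F p * pder 4 F p - 72 * Dtot F (pder 4 F) p * (pder 4 F p)^2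
    + 88 * pder 3 F p * (pder 4 F p)^2 + 9 * (pder 4 F p)^4
    + 16000 * pder 1 F p = 0


/-! For `F = f(y₃)` the total derivative acts on functions of `y₃` alone by `D(g(y₃)) = f g'`, so
`F₃ = f'`, `DF₃ = f f''`, `D²F₃ = f (f f'')'`, and every other term of Bryant's conditions vanishes.
Condition (C2) then reads `9 (4 f f'' - f'²)² = 0`, and when `4 f f'' = f'²` holds near the point,
differentiating it turns (C1) into `f' (f'² - 4 f f'') = 0`. The function `f = y₃^(4/3)` solves
`4 f f'' = f'²`. -/

open Filter Topology

section FunctionsOfThirdDerivative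

variable (f : ℝ → ℝ) (p : Fin 5 → ℝ)

lemma pder_comp_eval_four_of_ne {i : Fin 5} (hi : i ≠ 4) : pder i (fun q => f (q 4)) = 0 := by
  funext q
  simp only [pder, Function.update_of_ne (Ne.symm hi), deriv_const, Pi.zero_apply]

lemma pder_four_comp_eval_four : pder 4 (fun q => f (q 4)) = fun q => deriv f (q 4) := by
  funext q
  simp only [pder, Function.update_self]

lemma Dtot_comp_eval_four (F : (Fin 5 → ℝ) → ℝ) :
    Dtot F (fun q => f (q 4)) p = F p * deriv f (p 4) := by
  simp only [Dtot, pder_four_comp_eval_four, Pi.zero_apply,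
    pder_comp_eval_four_of_ne f (i := 0) (by decide),
    pder_comp_eval_four_of_ne f (i := 1) (by decide),
    pder_comp_eval_four_of_ne f (i := 2) (by decide),
    pder_comp_eval_four_of_ne f (i := 3) (by decide)]
  ring

lemma Dtot_zero (F : (Fin 5 → ℝ) → ℝ) : Dtot F 0 = 0 :=
  funext fun q => (Dtot_comp_eval_four (0 : ℝ → ℝ) q F).trans (by simp)

theorem bryantC2_comp_eval_four
    (h : 4 * (f (p 4) * deriv (deriv f) (p 4)) = deriv f (p 4) ^ 2) :
    BryantC2 (fun q => f (q 4)) p := by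
  have h1 : pder 1 (fun q => f (q 4)) = 0 := pder_comp_eval_four_of_ne f (by decide)
  have h2 : pder 2 (fun q => f (q 4)) = 0 := pder_comp_eval_four_of_ne f (by decide)
  have h3 : pder 3 (fun q => f (q 4)) = 0 := pder_comp_eval_four_of_ne f (by decide)
  simp only [BryantC2, h1, h2, h3, Dtot_zero, pder_four_comp_eval_four, Dtot_comp_eval_four,
    Pi.zero_apply]
  linear_combination
    (9 * (4 * (f (p 4) * deriv (deriv f) (p 4)) - deriv f (p 4) ^ 2)) * h

theorem bryantC1_comp_eval_four (hd : DifferentiableAt ℝ (deriv f) (p 4))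
    (h : ∀ᶠ t in 𝓝 (p 4), 4 * (f t * deriv (deriv f) t) = deriv f t ^ 2) :
    BryantC1 (fun q => f (q 4)) p := by
  have h2 : pder 2 (fun q => f (q 4)) = 0 := pder_comp_eval_four_of_ne f (by decide)
  have h3 : pder 3 (fun q => f (q 4)) = 0 := pder_comp_eval_four_of_ne f (by decide)
  have hD : Dtot (fun q => f (q 4)) (fun q => deriv f (q 4))
      = fun q => (fun t => f t * deriv (deriv f) t) (q 4) :=
    funext fun q => Dtot_comp_eval_four _ q _
  have hev : (fun t => f t * deriv (deriv f) t) =ᶠ[𝓝 (p 4)] fun t => deriv f t ^ 2 / 4 :=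
    h.mono fun t ht => by dsimp only; linarith
  have hderiv : deriv (fun t => f t * deriv (deriv f) t) (p 4)
      = deriv f (p 4) * deriv (deriv f) (p 4) / 2 := by
    rw [hev.deriv_eq, ((hd.hasDerivAt.fun_pow 2).div_const 4).deriv]
    ring
  rw [BryantC1, h2, h3, Dtot_zero, pder_four_comp_eval_four, hD,
    Dtot_comp_eval_four (fun t => f t * deriv (deriv f) t), hderiv]
  simp only [Pi.zero_apply]
  linear_combination (-deriv f (p 4)) * h.self_of_nhds

end FunctionsOfThirdDerivative

lemma hasDerivAt_deriv_rpow_four_thirds {t : ℝ} (ht : t ≠ 0) :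
    HasDerivAt (deriv fun s : ℝ => s ^ (4 / 3 : ℝ)) (4 / 9 * t ^ (-2 / 3 : ℝ)) t := by
  rw [Real.deriv_rpow_const']
  exact ((Real.hasDerivAt_rpow_const (p := 4 / 3 - 1) (Or.inl ht)).const_mul
    (4 / 3 : ℝ)).congr_deriv (by norm_num; ring)

lemma four_mul_rpow_mul_deriv_deriv {t : ℝ} (ht : 0 < t) :
    4 * (t ^ (4 / 3 : ℝ) * deriv (deriv fun s : ℝ => s ^ (4 / 3 : ℝ)) t)
      = deriv (fun s : ℝ => s ^ (4 / 3 : ℝ)) t ^ 2 := by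
  rw [(hasDerivAt_deriv_rpow_four_thirds ht.ne').deriv, Real.deriv_rpow_const, mul_pow,
    ← Real.rpow_mul_natCast ht.le, mul_left_comm _ (4 / 9 : ℝ), ← Real.rpow_add ht]
  norm_num
  ring

/-- The ODE `y'''' = (y''')^(4/3)`, i.e. `F(x,y,y₁,y₂,y₃) = y₃^(4/3)`, satisfies
both of Bryant's contact-invariant conditions on the region `y₃ > 0`. -/
theorem bryant_example_rpow :
    ∀ p : Fin 5 → ℝ, 0 < p 4 →
      BryantC1 (fun q => q 4 ^ ((4 : ℝ)/3)) p ∧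
      BryantC2 (fun q => q 4 ^ ((4 : ℝ)/3)) p := by
  intro p hp
  have hode : ∀ᶠ t in 𝓝 (p 4),
      4 * (t ^ (4 / 3 : ℝ) * deriv (deriv fun s : ℝ => s ^ (4 / 3 : ℝ)) t)
        = deriv (fun s : ℝ => s ^ (4 / 3 : ℝ)) t ^ 2 :=
    (eventually_gt_nhds hp).mono fun t ht => four_mul_rpow_mul_deriv_deriv ht
  exact ⟨bryantC1_comp_eval_four (fun s => s ^ ((4 : ℝ) / 3)) p
      (hasDerivAt_deriv_rpow_four_thirds hp.ne').differentiableAt hode,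
    bryantC2_comp_eval_four (fun s => s ^ ((4 : ℝ) / 3)) p hode.self_of_nhds⟩
end

section
/- Let a0⁰, a1⁰, a2⁰ be real numbers, let A ∈ ℝ and B, C ∈ ℝ \ {0}, and define a2 = (C²/B²)·a2⁰, a1 = (C/B²)·a1⁰ − (A·C/(3B³))·a2⁰, a0 = (1/B²)·a0⁰ − (2A/(3B³))·a1⁰ + (A²/(9B⁴))·a2⁰. Then a1² − a0·a2 = (C²/B⁴)·((a1⁰)² − a0⁰·a2⁰). In particular, the vanishing of the invariant I2 = a1² − a0·a2 is preserved under these transformations. -/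
/-- Transformation rule of the curvature coefficients `(a₀, a₁, a₂)` under the
residual group with parameters `A = α¹₀`, `B = α¹₁`, `C = α⁴₄`: the invariant
`I₂ = a₁² - a₀a₂` transforms by the factor `C²/B⁴`; in particular its vanishing
is preserved. -/
theorem I2_transformation (a00 a10 a20 A B C a0 a1 a2 : ℝ)
    (hB : B ≠ 0) (hC : C ≠ 0)
    (ha2 : a2 = (C^2/B^2) * a20)
    (ha1 : a1 = (C/B^2) * a10 - (A*C/(3*B^3)) * a20)
    (ha0 : a0 = (1/B^2) * a00 - (2*A/(3*B^3)) * a10 + (A^2/(9*B^4)) * a20) :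
    a1^2 - a0*a2 = (C^2/B^4) * (a10^2 - a00*a20) ∧
      (a1^2 - a0*a2 = 0 ↔ a10^2 - a00*a20 = 0) := by
  have key : a1^2 - a0*a2 = (C^2/B^4) * (a10^2 - a00*a20) := by
    subst ha0 ha1 ha2
    field_simp
    ring
  refine ⟨key, ?_⟩
  rw [key]
  constructor
  · intro h
    rcases mul_eq_zero.mp h with h' | h'
    · exact absurd h' (by positivity)
    · exact h'
  · intro h; rw [h, mul_zero]
end

section
/- Let b0⁰, b1⁰, b2⁰, b3⁰, b4⁰ be real numbers, let A ∈ ℝ and B, C ∈ ℝ \ {0}, and define b4 = (C³/B²)·b4⁰, b3 = (C²/B²)·b3⁰ + (A·C²/(3B³))·b4⁰, b2 = (C/B²)·b2⁰ + (2A·C/(3B³))·b3⁰ + (A²·C/(9B⁴))·b4⁰, b1 = (1/B²)·b1⁰ + (A/B³)·b2⁰ + (A²/(3B⁴))·b3⁰ + (A³/(27B⁵))·b4⁰, b0 = (1/(B²C))·b0⁰ + (4A/(3B³C))·b1⁰ + (2A²/(3B⁴C))·b2⁰ + (4A³/(27B⁵C))·b3⁰ + (A⁴/(81B⁶C))·b4⁰.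 Then 3b2² − 4b1·b3 + b0·b4 = (C²/B⁴)·(3(b2⁰)² − 4b1⁰·b3⁰ + b0⁰·b4⁰). In particular, the vanishing of the invariant I3 = 3b2² − 4b1·b3 + b0·b4 is preserved under these transformations. -/
/-- Transformation rule of the curvature coefficients `(b₀, b₁, b₂, b₃, b₄)`
under the residual group with parameters `A = α¹₀`, `B = α¹₁`, `C = α⁴₄`: the
invariant `I₃ = 3b₂² - 4b₁b₃ + b₀b₄` transforms by the factor `C²/B⁴`; in
particular its vanishing is preserved. -/
theorem I3_transformation (b00 b10 b20 b30 b40 A B C b0 b1 b2 b3 b4 : ℝ)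
    (hB : B ≠ 0) (hC : C ≠ 0)
    (hb4 : b4 = (C^3/B^2) * b40)
    (hb3 : b3 = (C^2/B^2) * b30 + (A*C^2/(3*B^3)) * b40)
    (hb2 : b2 = (C/B^2) * b20 + (2*A*C/(3*B^3)) * b30 + (A^2*C/(9*B^4)) * b40)
    (hb1 : b1 = (1/B^2) * b10 + (A/B^3) * b20 + (A^2/(3*B^4)) * b30
      + (A^3/(27*B^5)) * b40)
    (hb0 : b0 = (1/(B^2*C)) * b00 + (4*A/(3*B^3*C)) * b10
      + (2*A^2/(3*B^4*C)) * b20 + (4*A^3/(27*B^5*C)) * b30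
      + (A^4/(81*B^6*C)) * b40) :
    3*b2^2 - 4*b1*b3 + b0*b4 = (C^2/B^4) * (3*b20^2 - 4*b10*b30 + b00*b40) ∧
      (3*b2^2 - 4*b1*b3 + b0*b4 = 0 ↔ 3*b20^2 - 4*b10*b30 + b00*b40 = 0) := by
  have h : 3*b2^2 - 4*b1*b3 + b0*b4 = (C^2/B^4) * (3*b20^2 - 4*b10*b30 + b00*b40) := by
    subst hb0 hb1 hb2 hb3 hb4
    field_simp
    ring
  refine ⟨h, ?_⟩
  rw [h]
  constructor
  · intro h2
    have := mul_eq_zero.mp h2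
    rcases this with h3 | h3
    · exact absurd h3 (by positivity)
    · exact h3
  · intro h2; rw [h2, mul_zero]
end
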